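/- For every type α, every n : ℕ, and every list xs : List α with length xs = n + 2, subs xs = unT (up (ch (n+1) xs)). -/
import Mathlib


def subs {α : Type} : List α → List (List α)
  | [] => []
  | x :: xs => (subs xs).map (x :: ·) ++ [xs]

def choose {α : Type} : ℕ → List α → List (List α)
  | 0, _ => [[]]
  | k+1, xs =>
    if k + 1 = xs.length then [xs]
    else
      match xs with
      | [] => []
      | x :: xs' => (choose k xs').map (x :: ·) ++ choose (k+1) xs'

inductive B (α : Type) : Type
  | T : α → B α
  | N : B α → B α → B α

def mapB {α β : Type} (f : α → β) : B α → B β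
  | .T a => .T (f a)
  | .N t u => .N (mapB f t) (mapB f u)

def zipBW {α β γ : Type} (f : α → β → γ) : B α → B β → B γ
  | .T a, .T b => .T (f a b)
  | .N t u, .N t' u' => .N (zipBW f t t') (zipBW f u u')
  | .T a, v => mapB (f a) v
  | v, .T b => mapB (f · b) v

def ch {α : Type} : ℕ → List α → B (List α)
  | 0, _ => .T []
  | k+1, xs =>
    if k + 1 = xs.length then .T xs
    else
      match xs with
      | [] => .T []
      | x :: xs' => .N (mapB (x :: ·) (ch k xs')) (ch (k+1) xs')

def snoc {α : Type} (ys : List α) (z : α) : List α := ys ++ [z]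

def unT {α : Type} [Inhabited α] : B α → α
  | .T p => p
  | .N _ _ => default

def up {α : Type} : B α → B (List α)
  | .N (.T p) (.T q) => .T [p, q]
  | .N t (.T q) => .T (unT (up t) ++ [q])
  | .N (.T p) u => .N (mapB (fun q => [p, q]) u) (up u)
  | .N t u => .N (zipBW snoc (up t) u) (up u)
  | .T p => .T [p]

def ex {α : Type} [Inhabited α] : List α → α
  | [x] => x
  | _ => default

def td {X Y : Type} [Inhabited X] [Inhabited Y] (f : X → Y) (g : List Y → Y) : ℕ → List X → Y
  | 0, xs => f (ex xs)
  | n+1, xs => g ((subs xs).map (td f g n))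

def td' {Y : Type} [Inhabited Y] (g : List Y → Y) : ℕ → List Y → Y
  | 0, xs => ex xs
  | n+1, xs => g ((subs xs).map (td' g n))


theorem mapB_comp {α β γ : Type} (f : α → β) (g : β → γ) (t : B α) :
    mapB g (mapB f t) = mapB (fun x => g (f x)) t := by
  induction t <;> simp [mapB, *]

theorem mapB_congr {α β : Type} {f g : α → β} (h : ∀ x, f x = g x) (t : B α) :
    mapB f t = mapB g t := by
  induction t <;> simp [mapB, *]

theorem unT_mapB_map {α β : Type} (f : α → β) (s : B (List α)) :
    unT (mapB (List.map f) s) = List.map f (unT s) := by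
  cases s <;> rfl

theorem zipBW_TN {α β γ : Type} (f : α → β → γ) (a : α) (c d : B β) :
    zipBW f (.T a) (.N c d) = mapB (f a) (.N c d) := rfl

theorem zipBW_NT {α β γ : Type} (f : α → β → γ) (t u : B α) (b : β) :
    zipBW f (.N t u) (.T b) = mapB (f · b) (.N t u) := rfl

theorem zipBW_snoc_map {α β : Type} (f : α → β) :
    ∀ (s : B (List α)) (v : B α),
    zipBW snoc (mapB (List.map f) s) (mapB f v) = mapB (List.map f) (zipBW snoc s v)
  | .T a, .T b => by simp [mapB, zipBW, snoc]
  | .N t u, .N t' u' => by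
      simp [mapB, zipBW, zipBW_snoc_map f t t', zipBW_snoc_map f u u']
  | .T a, .N c d => by
      simp only [mapB, zipBW_TN, mapB_comp]
      congr 1 <;> exact mapB_congr (fun y => by simp [snoc]) _
  | .N t u, .T b => by
      simp only [mapB, zipBW_NT, mapB_comp]
      congr 1 <;> exact mapB_congr (fun y => by simp [snoc]) _

theorem up_NT {α : Type} (a b : B α) (q : α) :
    up (.N (.N a b) (.T q)) = .T (unT (up (.N a b)) ++ [q]) := rfl

theorem up_mapB {α β : Type} (f : α → β) :
    ∀ t : B α, up (mapB f t) = mapB (List.map f) (up t)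
  | .T p => rfl
  | .N (.T p) (.T q) => rfl
  | .N (.N a b) (.T q) => by
      have ih := up_mapB f (.N a b)
      show B.T (unT (up (mapB f (.N a b))) ++ [f q])
         = mapB (List.map f) (.T (unT (up (.N a b)) ++ [q]))
      rw [ih, unT_mapB_map, mapB]
      simp
  | .N (.T p) (.N c d) => by
      have ih := up_mapB f (.N c d)
      show B.N (mapB (fun q => [f p, q]) (mapB f (.N c d))) (up (mapB f (.N c d)))
         = B.N (mapB (List.map f) (mapB (fun q => [p, q]) (.N c d)))
               (mapB (List.map f) (up (.N c d)))
      rw [ih, mapB_comp, mapB_comp]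
      congr 1 <;> exact mapB_congr (fun y => by simp) _
  | .N (.N a b) (.N c d) => by
      have ih1 := up_mapB f (.N a b)
      have ih2 := up_mapB f (.N c d)
      show B.N (zipBW snoc (up (mapB f (.N a b))) (mapB f (.N c d))) (up (mapB f (.N c d)))
         = B.N (mapB (List.map f) (zipBW snoc (up (.N a b)) (.N c d)))
               (mapB (List.map f) (up (.N c d)))
      rw [ih1, ih2, zipBW_snoc_map]

theorem unT_up_key {α β : Type} (f : α → List β) (a b : B α) (q : List β) :
    unT (up (.N (mapB f (.N a b)) (.T q)))
      = List.map f (unT (up (.N a b))) ++ [q] := by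
  show unT (B.T (unT (up (mapB f (.N a b))) ++ [q])) = _
  rw [unT, up_mapB, unT_mapB_map]


theorem stmt5 {α : Type} (n : ℕ) (xs : List α) (h : xs.length = n + 2) :
    subs xs = unT (up (ch (n + 1) xs)) := by
  induction n generalizing xs with
  | zero =>
    match xs, h with
    | [a, b], _ => rfl
  | succ n ih =>
    match xs, h with
    | x :: y :: xs'', h =>
      have h' : (y :: xs'').length = n + 2 := by simpa using h
      have hx : (x :: y :: xs'').length = n + 3 := by simpa using h
      have hch : ch (n + 1) (y :: xs'') =
          .N (mapB (y :: ·) (ch n xs'')) (ch (n+1) xs'') := by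
        rw [ch]; simp [h']
      rw [show ch (n + 1 + 1) (x :: y :: xs'') =
        .N (mapB (x :: ·) (ch (n+1) (y :: xs''))) (ch (n+2) (y :: xs'')) from by
          rw [ch]; simp [hx]]
      rw [show ch (n + 2) (y :: xs'') = .T (y :: xs'') from by rw [ch]; simp [h']]
      rw [hch, unT_up_key]
      have hih := ih (y :: xs'') h'
      rw [hch] at hih
      rw [← hih, subs]
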